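/- arXiv:2401.07577 — 4 statements merged into one kernel-verified Lean document; each statement's English description precedes it below -/
import Mathlib

section
/- Let Π_α be a CMCP instance with clusters C_1, …, C_p of finite subsets of a finite type U, and let S* = (S*_1, …, S*_p), with S*_j ∈ C_j, be an optimal selection, so OPT(Π_α) = |S*_1 ∪ … ∪ S*_p| is maximal among all selections. Fix an arbitrary index a ∈ {1, …, p} and an arbitrary subset S_a ∈ C_a. Let D = ⋃_{j ≠ a} S*_j, let y = |S*_a \ D| (the number of elements only S*_a covers among the selection), and let c = |S_a ∩ D|. Let Π_β be the instance whose clusters are C_j for j ≠ a, in which the elements of S_a ∩ D are removed from the universe (i.e., every subset S of every remaining cluster is replaced by S \ (S_a ∩ D)). Then the optimal coverage of Π_β is at least OPT(Π_α) − y − c. -/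
/-- Lemma 2, lower-bound direction: let `S*` be an optimal selection of
a CMCP instance with clusters `C 1, …, C p`, fix an index `a` and a subset `Sa ∈ C a`,
let `D = ⋃_{j ≠ a} S*_j`, `y = |S*_a \ D|`, `c = |Sa ∩ D|`.  The instance `Π_β` obtained
by deleting cluster `C a` and removing the elements of `Sa ∩ D` from every subset of the
remaining clusters has optimal coverage at least `OPT(Π_α) - y - c`. -/
theorem pruned_instance_opt_lower_bound {U : Type*} [Fintype U] [DecidableEq U] {p : ℕ}
    (C : Fin p → Finset (Finset U)) (sStar : Fin p → Finset U)
    (hmem : ∀ j, sStar j ∈ C j)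
    (hopt : ∀ f : Fin p → Finset U, (∀ j, f j ∈ C j) →
      (Finset.univ.biUnion f).card ≤ (Finset.univ.biUnion sStar).card)
    (a : Fin p) (Sa : Finset U) (hSa : Sa ∈ C a) :
    ∃ g : Fin p → Finset U, (∀ j, j ≠ a → g j ∈ C j) ∧
      (Finset.univ.biUnion sStar).card
          - (sStar a \ (Finset.univ.erase a).biUnion sStar).card
          - (Sa ∩ (Finset.univ.erase a).biUnion sStar).card
        ≤ ((Finset.univ.erase a).biUnion
            (fun j => g j \ (Sa ∩ (Finset.univ.erase a).biUnion sStar))).card := by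
  refine ⟨sStar, fun j _ => hmem j, ?_⟩
  set D := (Finset.univ.erase a).biUnion sStar with hD
  have h1 : Finset.univ.biUnion sStar = sStar a ∪ D := by
    ext x
    simp only [Finset.mem_biUnion, Finset.mem_union, Finset.mem_univ, true_and, hD,
      Finset.mem_erase]
    constructor
    · rintro ⟨j, hj⟩
      by_cases h : j = a
      · exact Or.inl (h ▸ hj)
      · exact Or.inr ⟨j, ⟨h, trivial⟩, hj⟩
    · rintro (h | ⟨j, _, hj⟩)
      · exact ⟨a, h⟩
      · exact ⟨j, hj⟩
  have h2 : (Finset.univ.erase a).biUnion (fun j => sStar j \ (Sa ∩ D))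
      = D \ (Sa ∩ D) := by
    ext x
    simp only [Finset.mem_biUnion, Finset.mem_sdiff, hD]
    tauto
  have hsub : Sa ∩ D ⊆ D := Finset.inter_subset_right
  have h3 : (D \ (Sa ∩ D)).card = D.card - (Sa ∩ D).card :=
    Finset.card_sdiff_of_subset hsub
  have h4 : (Finset.univ.biUnion sStar).card = (sStar a \ D).card + D.card := by
    rw [h1, ← Finset.card_sdiff_add_card]
  rw [h2, h3, h4]
  omega
end

section
/- Let U be a finite type and let C_1, …, C_p be p nonempty finite families of finite subsets of U (the clusters), and let OPT be the maximum of |S_1 ∪ … ∪ S_p| over all selections S_i ∈ C_i. Let π be a permutation of {1, …, p} (the order in which the greedy algorithm processes the clusters) and let A_1, …, A_p be subsets with A_i ∈ C_{π(i)} such that for every i and every subset S belonging to any not-yet-processed cluster C_{π(j)} with j ≥ i, one has |S \ (A_1 ∪ … ∪ A_{i−1})| ≤ |A_i \ (A_1 ∪ … ∪ A_{i−1})| (i.e., each A_i covers as many uncovered elements as possible among all available clusters). Then 2·|A_1 ∪ … ∪ A_p| ≥ OPT; that is, the greedy algorithm for the clustered maximum coverage problem is a 1/2-approximation. -/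
/-!
The greedy cover `G = ⋃ i, A i` is the disjoint union of the gains `A i \ ⋃_{t < i} A t`.
The set chosen by `f` from cluster `π i` was still available at step `i`, so its part outside `G`
is no larger than its part outside `⋃_{t < i} A t`, which by greediness is at most the `i`-th gain.
Summing over `i` gives `|⋃ f \ G| ≤ |G|`.
-/

open Finset

section

variable {ι κ U : Type*} [DecidableEq U] [Fintype ι] [LinearOrder ι] [LocallyFiniteOrderBot ι]

theorem Finset.card_sup_eq_sum_card_disjointed (A : ι → Finset U) :
    (univ.sup A).card = ∑ i, (disjointed A i).card := by
  rw [← Fintype.sup_disjointed, sup_eq_biUnion,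
    card_biUnion ((disjoint_disjointed A).set_pairwise _)]

theorem Finset.card_sup_le_two_mul_of_card_sdiff_le_disjointed [Fintype κ] (A : ι → Finset U)
    (f : κ → Finset U) (e : ι ≃ κ)
    (h : ∀ i, (f (e i) \ (Iio i).sup A).card ≤ (disjointed A i).card) :
    (univ.sup f).card ≤ 2 * (univ.sup A).card := by
  have hnew : (univ.sup f \ univ.sup A).card ≤ (univ.sup A).card :=
    calc (univ.sup f \ univ.sup A).card
        = (univ.biUnion fun k => f k \ univ.sup A).card := by
          rw [← sup_sdiff_right, sup_eq_biUnion]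
      _ ≤ ∑ k, (f k \ univ.sup A).card := card_biUnion_le
      _ = ∑ i, (f (e i) \ univ.sup A).card := (e.sum_comp _).symm
      _ ≤ ∑ i, (disjointed A i).card := sum_le_sum fun i _ =>
          (card_le_card (sdiff_subset_sdiff le_rfl (sup_mono (subset_univ _)))).trans (h i)
      _ = (univ.sup A).card := (card_sup_eq_sum_card_disjointed A).symm
  have := card_le_card_sdiff_add_card (s := univ.sup f) (t := univ.sup A)
  omega

end

theorem greedy_cmcp_half_approximation_general {U : Type*} [DecidableEq U] {p : ℕ}
    (C : Fin p → Finset (Finset U))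
    (π : Equiv.Perm (Fin p)) (A : Fin p → Finset U)
    (hgreedy : ∀ i j : Fin p, i ≤ j → ∀ S ∈ C (π j),
      (S \ (Finset.univ.filter (fun t => t < i)).biUnion A).card
        ≤ (A i \ (Finset.univ.filter (fun t => t < i)).biUnion A).card) :
    ∀ f : Fin p → Finset U, (∀ j, f j ∈ C j) →
      (Finset.univ.biUnion f).card ≤ 2 * (Finset.univ.biUnion A).card := by
  intro f hf
  simp only [← sup_eq_biUnion, filter_gt_eq_Iio] at hgreedy ⊢
  exact card_sup_le_two_mul_of_card_sdiff_le_disjointed A f π fun i =>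
    hgreedy i i le_rfl (f (π i)) (hf (π i))

/-- Theorem 1: the greedy algorithm for the clustered maximum coverage
problem is a `1/2`-approximation.  If the greedy algorithm processes the clusters in the
order given by a permutation `π`, choosing at step `i` a subset `A i ∈ C (π i)` that
covers at least as many uncovered elements as any subset of any not-yet-processed
cluster, then twice the coverage of the greedy selection is at least the coverage of
any selection (hence at least `OPT`). -/
theorem greedy_cmcp_half_approximation {U : Type*} [Fintype U] [DecidableEq U] {p : ℕ}
    (C : Fin p → Finset (Finset U)) (hC : ∀ i, (C i).Nonempty)
    (π : Equiv.Perm (Fin p)) (A : Fin p → Finset U)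
    (hA : ∀ i, A i ∈ C (π i))
    (hgreedy : ∀ i j : Fin p, i ≤ j → ∀ S ∈ C (π j),
      (S \ (Finset.univ.filter (fun t => t < i)).biUnion A).card
        ≤ (A i \ (Finset.univ.filter (fun t => t < i)).biUnion A).card) :
    ∀ f : Fin p → Finset U, (∀ j, f j ∈ C j) →
      (Finset.univ.biUnion f).card ≤ 2 * (Finset.univ.biUnion A).card :=
  greedy_cmcp_half_approximation_general C π A hgreedy
end

section
/- Let G be a finite connected simple graph with n vertices and let p ≥ 1. Suppose u_1, …, u_p is a sequence of vertices produced by the greedy burning heuristic Gr, i.e., for every i ∈ {1, …, p} and every vertex w, |N_{p−i}[w] \ B_{i−1}| ≤ |N_{p−i}[u_i] \ B_{i−1}|, where B_{i−1} = N_{p−1}[u_1] ∪ N_{p−2}[u_2] ∪ … ∪ N_{p−(i−1)}[u_{i−1}] (with B_0 = ∅). If 2·|B_p| < n (the greedy selection covers fewer than half of the vertices), then G has no burning sequence of length p; that is, p < b(G). -/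
/-- The closed ball `N_r[v] = {w : dist w v ≤ r}` of radius `r` around `v`. -/
noncomputable def closedBall {V : Type*} [Fintype V] (G : SimpleGraph V) (r : ℕ) (v : V) :
    Finset V :=
  Finset.univ.filter (fun w => G.dist w v ≤ r)

/-- The set `B_i` of vertices covered after the first `i` steps of the greedy burning
heuristic with guess `p` and selected vertices `u 0, u 1, …`: the union of the balls
`N_{p-(j+1)}[u j]` for `j < i`. -/
noncomputable def greedyCovered {V : Type*} [Fintype V] [DecidableEq V] (G : SimpleGraph V)
    (p : ℕ) (u : ℕ → V) (i : ℕ) : Finset V :=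
  (Finset.range i).biUnion (fun j => closedBall G (p - (j + 1)) (u j))

lemma greedyCovered_succ {V : Type*} [Fintype V] [DecidableEq V] (G : SimpleGraph V)
    (p : ℕ) (u : ℕ → V) (i : ℕ) :
    greedyCovered G p u (i + 1) = greedyCovered G p u i ∪ closedBall G (p - (i + 1)) (u i) := by
  simp [greedyCovered, Finset.range_add_one, Finset.biUnion_insert, Finset.union_comm]

lemma greedyCovered_mono {V : Type*} [Fintype V] [DecidableEq V] (G : SimpleGraph V)
    (p : ℕ) (u : ℕ → V) : Monotone (fun i => greedyCovered G p u i) := by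
  apply monotone_nat_of_le_succ
  intro i
  rw [greedyCovered_succ]
  exact Finset.subset_union_left

/-- no burning sequence of length p -/
lemma greedy_no_burn {V : Type*} [Fintype V] [DecidableEq V]
    (G : SimpleGraph V) (p : ℕ) (u : ℕ → V)
    (hgreedy : ∀ i < p, ∀ w : V,
      (closedBall G (p - (i + 1)) w \ greedyCovered G p u i).card
        ≤ (closedBall G (p - (i + 1)) (u i) \ greedyCovered G p u i).card)
    (hlow : 2 * (greedyCovered G p u p).card < Fintype.card V) :
    ¬ ∃ v : Fin p → V, ∀ w : V, ∃ i : Fin p, G.dist w (v i) ≤ p - (i.1 + 1) := by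
  rintro ⟨v, hv⟩
  set B := greedyCovered G p u with hB
  have hgain : ∀ i, (closedBall G (p - (i + 1)) (u i) \ B i).card
      = (B (i + 1)).card - (B i).card := by
    intro i
    have h1 : B (i + 1) = B i ∪ closedBall G (p - (i + 1)) (u i) :=
      greedyCovered_succ G p u i
    have h2 := Finset.card_sdiff_add_card (s := closedBall G (p - (i + 1)) (u i)) (t := B i)
    rw [h1, Finset.union_comm]
    omega
  -- uncovered set is contained in union over i of (ball (v i) \ B i)
  have hcover : Finset.univ \ B p ⊆
      Finset.univ.biUnion (fun i : Fin p => closedBall G (p - (i.1 + 1)) (v i) \ B i.1) := by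
    intro x hx
    rw [Finset.mem_sdiff] at hx
    obtain ⟨i, hi⟩ := hv x
    refine Finset.mem_biUnion.mpr ⟨i, Finset.mem_univ _, ?_⟩
    rw [Finset.mem_sdiff]
    constructor
    · simp [closedBall, hi]
    · intro hmem
      exact hx.2 (greedyCovered_mono G p u (le_of_lt i.isLt) hmem)
  have hsum : (Finset.univ \ B p).card ≤ ∑ i : Fin p, (closedBall G (p - (i.1 + 1)) (v i) \ B i.1).card :=
    le_trans (Finset.card_le_card hcover) (Finset.card_biUnion_le)
  have hsum2 : ∑ i : Fin p, (closedBall G (p - (i.1 + 1)) (v i) \ B i.1).card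
      ≤ ∑ i : Fin p, ((B (i.1 + 1)).card - (B i.1).card) := by
    apply Finset.sum_le_sum
    intro i _
    rw [← hgain]
    exact hgreedy i.1 i.isLt (v i)
  have htel : ∑ i : Fin p, ((B (i.1 + 1)).card - (B i.1).card) = (B p).card := by
    rw [Fin.sum_univ_eq_sum_range (fun i => (B (i + 1)).card - (B i).card)]
    have hmono : Monotone (fun i => (B i).card) :=
      fun a b hab => Finset.card_le_card (greedyCovered_mono G p u hab)
    rw [Finset.sum_range_tsub hmono]
    simp [hB, greedyCovered]
  have hsplit : (Finset.univ \ B p).card + (B p).card = Fintype.card V := by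
    rw [Finset.card_sdiff_add_card_eq_card (Finset.subset_univ _), Finset.card_univ]
  omega

/-- Proposition 4: if the vertices `u 0, …, u (p-1)` selected by the greedy
burning heuristic Gr (each `u i` maximizing the number of newly covered vertices in the
ball of radius `p - (i+1)`) cover fewer than half of the `n` vertices, then `G` has no
burning sequence of length `p`; that is, `p < b(G)`. -/
theorem greedy_low_coverage_implies_no_burning {V : Type*} [Fintype V] [DecidableEq V]
    (G : SimpleGraph V) (hG : G.Connected) (p : ℕ) (hp : 1 ≤ p) (u : ℕ → V)
    (hgreedy : ∀ i < p, ∀ w : V,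
      (closedBall G (p - (i + 1)) w \ greedyCovered G p u i).card
        ≤ (closedBall G (p - (i + 1)) (u i) \ greedyCovered G p u i).card)
    (hlow : 2 * (greedyCovered G p u p).card < Fintype.card V) :
    (¬ ∃ v : Fin p → V, ∀ w : V, ∃ i : Fin p, G.dist w (v i) ≤ p - (i.1 + 1)) ∧
    p < sInf {q : ℕ | ∃ v : Fin q → V, ∀ w : V, ∃ i : Fin q, G.dist w (v i) ≤ q - (i.1 + 1)} := by
  have hno := greedy_no_burn G p u hgreedy hlow
  have hVpos : 0 < Fintype.card V := by omega
  have hVne : Nonempty V := Fintype.card_pos_iff.mp hVpos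
  obtain ⟨v0⟩ := hVne
  refine ⟨hno, ?_⟩
  set S := {q : ℕ | ∃ v : Fin q → V, ∀ w : V, ∃ i : Fin q, G.dist w (v i) ≤ q - (i.1 + 1)} with hS
  have hSne : S.Nonempty := by
    refine ⟨1 + Finset.univ.sup (fun w => G.dist w v0), fun _ => v0, fun w => ?_⟩
    refine ⟨⟨0, by omega⟩, ?_⟩
    have := Finset.le_sup (f := fun w => G.dist w v0) (Finset.mem_univ w)
    simpa using this
  by_contra hcon
  push_neg at hcon
  have hmem := Nat.sInf_mem hSne
  set m := sInf S with hm
  clear_value m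
  obtain ⟨v, hv⟩ := hmem
  have hmp : m ≤ p := hcon
  apply hno
  refine ⟨fun j => if h : p - m ≤ j.1 then v ⟨j.1 - (p - m), by omega⟩ else v0, fun w => ?_⟩
  obtain ⟨i, hi⟩ := hv w
  obtain ⟨k, hk⟩ := i
  have hij : k + (p - m) < p := by omega
  refine ⟨⟨k + (p - m), hij⟩, ?_⟩
  have h1 : p - m ≤ k + (p - m) := by omega
  simp only [dif_pos h1]
  have h2 : (⟨k + (p - m) - (p - m), by omega⟩ : Fin m) = ⟨k, hk⟩ := Fin.mk_eq_mk.mpr (by omega)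
  rw [h2]
  have h4 : p - (k + (p - m) + 1) = m - (k + 1) := by omega
  simpa [h4] using hi
end

section
/- Let P_25 be the path graph on 25 vertices. Then: (a) P_25 has a burning sequence of length 5 (indeed b(P_25) = ⌈√25⌉ = 5); and (b) there exists a sequence of vertices u_1, …, u_5 satisfying the greedy condition of the heuristic Gr with guess p = 5 — for every i ∈ {1, …, 5} and every vertex w, |N_{5−i}[w] \ B_{i−1}| ≤ |N_{5−i}[u_i] \ B_{i−1}|, where B_{i−1} = ⋃_{j<i} N_{5−j}[u_j] and B_0 = ∅ — such that B_5 is not the whole vertex set. That is, even when run with the correct guess p = b(G), the greedy heuristic Gr may fail to return a burning sequence on a path. -/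
open SimpleGraph Finset

namespace SimpleGraph

lemma dist_pathGraph_le {n : ℕ} (i j : Fin n) : (pathGraph n).dist i j ≤ Nat.dist i j := by
  wlog hij : i ≤ j generalizing i j
  · rw [dist_comm, Nat.dist_comm]
    exact this j i (le_of_not_ge hij)
  suffices h : ∀ k (j : Fin n), j.val = i.val + k → (pathGraph n).dist i j ≤ k by
    exact h _ j (by rw [Nat.dist_eq_sub_of_le hij]; omega)
  intro k
  induction k with
  | zero => intro j hj; simp [Fin.ext hj.symm]
  | succ k ih =>
    intro j hj
    let m : Fin n := ⟨i + k, by omega⟩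
    have hmj : (pathGraph n).dist m j = 1 :=
      dist_eq_one_iff_adj.2 (pathGraph_adj.2 (.inl hj.symm))
    calc (pathGraph n).dist i j ≤ (pathGraph n).dist i m + (pathGraph n).dist m j :=
          (pathGraph_preconnected n i m).dist_triangle_left j
      _ ≤ k + 1 := by rw [hmj]; exact Nat.add_le_add_right (ih m rfl) 1

lemma natDist_le_length_of_walk_pathGraph {n : ℕ} {i j : Fin n} (w : (pathGraph n).Walk i j) :
    Nat.dist i j ≤ w.length := by
  induction w with
  | nil => simp
  | @cons a b c hadj w ih =>
    have hab : Nat.dist a b = 1 := by rw [pathGraph_adj] at hadj; unfold Nat.dist; omega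
    have := Nat.dist.triangle_inequality a b c
    rw [Walk.length_cons]
    omega

theorem dist_pathGraph {n : ℕ} (i j : Fin n) : (pathGraph n).dist i j = Nat.dist i j := by
  obtain ⟨w, hw⟩ := (pathGraph_preconnected n i j).exists_walk_length_eq_dist
  exact le_antisymm (dist_pathGraph_le i j) (hw ▸ natDist_le_length_of_walk_pathGraph w)

end SimpleGraph

lemma closedBall_pathGraph {n : ℕ} (r : ℕ) (v : Fin n) :
    closedBall (pathGraph n) r v = univ.filter (fun w : Fin n => Nat.dist w v ≤ r) := by
  simp only [closedBall, dist_pathGraph]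

lemma card_closedBall_pathGraph_le {n : ℕ} (r : ℕ) (v : Fin n) :
    #(closedBall (pathGraph n) r v) ≤ 2 * r + 1 := by
  calc #(closedBall (pathGraph n) r v) ≤ #(Icc (v - r : ℕ) (v + r)) := by
        refine card_le_card_of_injOn Fin.val (fun w hw => ?_) Fin.val_injective.injOn
        rw [SetLike.mem_coe, closedBall_pathGraph, mem_filter, Nat.dist] at hw
        rw [SetLike.mem_coe, mem_Icc]
        omega
    _ ≤ 2 * r + 1 := by rw [Nat.card_Icc]; omega

lemma Fin.sum_two_mul_sub_succ_add_one_eq_sq (p : ℕ) :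
    ∑ i : Fin p, (2 * (p - (i + 1)) + 1) = p ^ 2 := by
  induction p with
  | zero => simp
  | succ p ih =>
    rw [Fin.sum_univ_succ]
    simp only [Fin.val_zero, Fin.val_succ, Nat.add_sub_add_right, Nat.sub_zero, ih]
    ring

def IsBurningSequence {V : Type*} (G : SimpleGraph V) {p : ℕ} (u : Fin p → V) : Prop :=
  ∀ v, ∃ i : Fin p, G.dist v (u i) ≤ p - (i + 1)

noncomputable def burningNumber {V : Type*} (G : SimpleGraph V) : ℕ :=
  sInf {p | ∃ u : Fin p → V, IsBurningSequence G u}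

lemma IsBurningSequence.card_le_sum_card_closedBall {V : Type*} [Fintype V] [DecidableEq V]
    {G : SimpleGraph V} {p : ℕ} {u : Fin p → V} (hu : IsBurningSequence G u) :
    Fintype.card V ≤ ∑ i : Fin p, #(closedBall G (p - (i + 1)) (u i)) := by
  have hcover :
      (univ : Finset V) ⊆ univ.biUnion fun i : Fin p => closedBall G (p - (i + 1)) (u i) := by
    intro v _
    obtain ⟨i, hi⟩ := hu v
    exact mem_biUnion.2 ⟨i, mem_univ i, mem_filter.2 ⟨mem_univ v, hi⟩⟩
  exact (card_le_card hcover).trans card_biUnion_le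

lemma IsBurningSequence.le_sq_of_pathGraph {n p : ℕ} {u : Fin p → Fin n}
    (hu : IsBurningSequence (pathGraph n) u) : n ≤ p ^ 2 := by
  calc n = Fintype.card (Fin n) := (Fintype.card_fin n).symm
    _ ≤ ∑ i : Fin p, #(closedBall (pathGraph n) (p - (i + 1)) (u i)) :=
        hu.card_le_sum_card_closedBall
    _ ≤ ∑ i : Fin p, (2 * (p - (i + 1)) + 1) :=
        sum_le_sum fun i _ => card_closedBall_pathGraph_le _ _
    _ = p ^ 2 := Fin.sum_two_mul_sub_succ_add_one_eq_sq p

lemma burningNumber_pathGraph_eq {n p : ℕ} {u : Fin p → Fin n}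
    (hu : IsBurningSequence (pathGraph n) u) (hn : (p - 1) ^ 2 < n) :
    burningNumber (pathGraph n) = p := by
  refine le_antisymm (Nat.sInf_le ⟨u, hu⟩) (le_of_not_gt fun hlt => ?_)
  obtain ⟨v, hv⟩ : burningNumber (pathGraph n) ∈
      {q | ∃ v : Fin q → Fin n, IsBurningSequence (pathGraph n) v} := Nat.sInf_mem ⟨p, u, hu⟩
  have := hv.le_sq_of_pathGraph
  have : burningNumber (pathGraph n) ^ 2 ≤ (p - 1) ^ 2 := Nat.pow_le_pow_left (by omega) 2
  omega

def IsGreedyRun {V : Type*} [Fintype V] [DecidableEq V] (G : SimpleGraph V) (p : ℕ)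
    (u : ℕ → V) : Prop :=
  ∀ i < p, ∀ w, #(closedBall G (p - (i + 1)) w \ greedyCovered G p u i)
    ≤ #(closedBall G (p - (i + 1)) (u i) \ greedyCovered G p u i)

def greedyRunP25 : ℕ → Fin 25
  | 0 => 4
  | 1 => 12
  | 2 => 20
  | 3 => 23
  | _ => 16

lemma isGreedyRun_greedyRunP25 : IsGreedyRun (pathGraph 25) 5 greedyRunP25 := by
  simp only [IsGreedyRun, greedyCovered, closedBall_pathGraph]
  decide

lemma greedyCovered_greedyRunP25 :
    greedyCovered (pathGraph 25) 5 greedyRunP25 5 ≠ univ := by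
  simp only [greedyCovered, closedBall_pathGraph]
  decide

lemma isBurningSequence_P25 :
    IsBurningSequence (pathGraph 25) (![4, 12, 18, 22, 24] : Fin 5 → Fin 25) := by
  simp only [IsBurningSequence, dist_pathGraph]
  decide

/-- Proposition 3: (a) the path `P_25` has a burning sequence of length 5,
and indeed its burning number equals `5 = ⌈√25⌉`; (b) there is a run of the greedy
heuristic Gr with the correct guess `p = 5` (each `u i` maximizing the number of newly
covered vertices) whose final covered set `B_5` is not the whole vertex set, i.e. Gr may
fail to return a burning sequence on a path. -/
theorem greedy_may_fail_on_path_P25 :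
    (∃ u : Fin 5 → Fin 25, ∀ v : Fin 25, ∃ i : Fin 5,
      (SimpleGraph.pathGraph 25).dist v (u i) ≤ 5 - (i.1 + 1)) ∧
    sInf {p : ℕ | ∃ u : Fin p → Fin 25, ∀ v : Fin 25, ∃ i : Fin p,
      (SimpleGraph.pathGraph 25).dist v (u i) ≤ p - (i.1 + 1)} = 5 ∧
    5 = Nat.ceil (Real.sqrt 25) ∧
    ∃ u : ℕ → Fin 25,
      (∀ i < 5, ∀ w : Fin 25,
        (closedBall (SimpleGraph.pathGraph 25) (5 - (i + 1)) w
            \ greedyCovered (SimpleGraph.pathGraph 25) 5 u i).card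
          ≤ (closedBall (SimpleGraph.pathGraph 25) (5 - (i + 1)) (u i)
            \ greedyCovered (SimpleGraph.pathGraph 25) 5 u i).card) ∧
      greedyCovered (SimpleGraph.pathGraph 25) 5 u 5 ≠ Finset.univ := by
  have hsqrt : Real.sqrt 25 = 5 := by
    rw [show (25 : ℝ) = 5 ^ 2 by norm_num, Real.sqrt_sq (by norm_num)]
  exact ⟨⟨_, isBurningSequence_P25⟩,
    burningNumber_pathGraph_eq isBurningSequence_P25 (by norm_num),
    by rw [hsqrt]; norm_num,
    greedyRunP25, isGreedyRun_greedyRunP25, greedyCovered_greedyRunP25⟩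
end
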